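/- arXiv:0909.0811 — 2 statements merged into one kernel-verified Lean document; each statement's English description precedes it below -/
import Mathlib

section
/- For every integer m ≥ 0 and every β ∈ F_q, Σ_{a ∈ F_q^*} λ(−aβ) · K(λ; a²)^m = q·δ(m,q;β) − (q−1)^m. -/
open scoped BigOperators Classical

noncomputable section

abbrev Fq (r : ℕ) : Type := GaloisField 3 r
noncomputable instance (r : ℕ) : Fintype (Fq r) := Fintype.ofFinite _

def lam (r : ℕ) (x : Fq r) : ℂ :=
  Complex.exp (2 * Real.pi * Complex.I * ((Algebra.trace (ZMod 3) (Fq r) x).val : ℂ) / 3)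

def Kl (r : ℕ) (a : Fq r) : ℂ :=
  ∑ α ∈ Finset.univ.filter (fun α : Fq r => α ≠ 0), lam r (α + a * α⁻¹)

/-- `δ(m, q; β)`, the number of `m`-tuples of nonzero elements with
`α₁ + α₁⁻¹ + ⋯ + α_m + α_m⁻¹ = β`; for `m = 0` it is `1` if `β = 0` and `0` otherwise. -/
def deltaCount (r m : ℕ) (β : Fq r) : ℕ :=
  (Finset.univ.filter
    (fun α : Fin m → Fq r => (∀ i, α i ≠ 0) ∧ ∑ i, (α i + (α i)⁻¹) = β)).card

/-!
Expanding the `m`-th power, `λ(-aβ) K(λ; a²)^m` becomes a sum over `m`-tuples `γ` of nonzero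
elements of `λ(a (γ₁ + γ₁⁻¹ + ⋯ + γ_m + γ_m⁻¹ - β))`, after the substitution `α = a γ` in each
Kloosterman sum. Summing first over `a ≠ 0`, orthogonality of the primitive character `λ` gives
`q - 1` for the tuples with `∑ (γᵢ + γᵢ⁻¹) = β` and `-1` for all the others.
-/

open Finset

namespace AddChar

variable {A F R : Type*}

lemma map_sum_eq_prod [AddCommMonoid A] [CommMonoid R] (ψ : AddChar A R) {ι : Type*}
    (s : Finset ι) (f : ι → A) : ψ (∑ i ∈ s, f i) = ∏ i ∈ s, ψ (f i) := by
  induction s using Finset.induction_on with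
  | empty => simp
  | insert i s hi ih => rw [sum_insert hi, prod_insert hi, map_add_eq_mul, ih]

variable [CommRing F] [Fintype F] [CommRing R] [IsDomain R] {ψ : AddChar F R}

lemma sum_ne_zero_mulShift (hψ : ψ.IsPrimitive) (t : F) :
    ∑ a ∈ univ.filter (· ≠ 0), ψ (a * t) = (if t = 0 then (Fintype.card F : R) else 0) - 1 := by
  have h := sum_mulShift t hψ
  rw [← add_sum_erase univ _ (mem_univ 0), zero_mul, map_zero_eq_one, ← filter_ne'] at h
  push_cast at h
  rw [eq_sub_iff_add_eq, add_comm, h]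

theorem sum_mul_pow_sum_eq_card_mul_card_filter_sub (hψ : ψ.IsPrimitive) (S : Finset F)
    (g : F → F) (m : ℕ) (β : F) :
    ∑ a ∈ univ.filter (· ≠ 0), ψ (-a * β) * (∑ γ ∈ S, ψ (a * g γ)) ^ m =
      Fintype.card F * #((Fintype.piFinset fun _ : Fin m => S).filter
        fun γ => ∑ i, g (γ i) = β) - #S ^ m := by
  have expand : ∀ a, ψ (-a * β) * (∑ γ ∈ S, ψ (a * g γ)) ^ m =
      ∑ γ ∈ Fintype.piFinset (fun _ : Fin m => S), ψ (a * (∑ i, g (γ i) - β)) := by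
    intro a
    rw [← Fin.prod_const, prod_univ_sum, mul_sum]
    refine sum_congr rfl fun γ _ => ?_
    rw [← map_sum_eq_prod, ← map_add_eq_mul, mul_sub, mul_sum]
    ring_nf
  simp_rw [expand]
  rw [sum_comm]
  simp_rw [sum_ne_zero_mulShift hψ, sum_sub_distrib, sub_eq_zero, ← sum_filter, sum_const,
    Fintype.card_piFinset_const, nsmul_eq_mul, mul_one, Nat.cast_pow, mul_comm]

end AddChar

lemma sum_ne_zero_add_sq_mul_inv {F M : Type*} [Field F] [Fintype F] [AddCommMonoid M]
    (f : F → M) {a : F} (ha : a ≠ 0) :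
    ∑ α ∈ univ.filter (· ≠ 0), f (α + a ^ 2 * α⁻¹) =
      ∑ γ ∈ univ.filter (· ≠ 0), f (a * (γ + γ⁻¹)) := by
  refine sum_equiv (Equiv.mulLeft₀ a⁻¹ (inv_ne_zero ha)) (by simp [ha]) fun α hα => ?_
  rw [mem_filter] at hα
  congr 1
  simp only [Equiv.mulLeft₀, Units.mulLeft_apply, Units.val_mk0]
  field_simp [hα.2]

lemma AddChar.isPrimitive_compAddMonoidHom_trace {K L R : Type*} [Field K] [Field L]
    [Algebra K L] [FiniteDimensional K L] [Algebra.IsSeparable K L] [CommMonoid R]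
    {ψ : AddChar K R} (hψ : ψ ≠ 1) :
    (ψ.compAddMonoidHom (Algebra.trace K L).toAddMonoidHom).IsPrimitive := by
  refine IsPrimitive.of_ne_one fun h => ?_
  obtain ⟨x, hx⟩ := ψ.ne_one_iff.1 hψ
  obtain ⟨y, rfl⟩ := Algebra.trace_surjective K L x
  exact hx (by simpa using DFunLike.congr_fun h y)

def lamChar (r : ℕ) : AddChar (Fq r) ℂ :=
  ZMod.stdAddChar.compAddMonoidHom (Algebra.trace (ZMod 3) (Fq r)).toAddMonoidHom

lemma lam_eq_lamChar (r : ℕ) (x : Fq r) : lam r x = lamChar r x := by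
  rw [lamChar, AddChar.compAddMonoidHom_apply, LinearMap.toAddMonoidHom_coe, ZMod.stdAddChar_apply,
    ZMod.toCircle_apply, lam]
  push_cast
  ring_nf

lemma isPrimitive_lamChar (r : ℕ) : (lamChar r).IsPrimitive :=
  AddChar.isPrimitive_compAddMonoidHom_trace
    (by simpa using ZMod.isPrimitive_stdAddChar 3 one_ne_zero)

lemma card_Fq_eq {r : ℕ} (hr : 0 < r) : (Fintype.card (Fq r) : ℂ) = 3 ^ r := by
  rw [← Nat.card_eq_fintype_card, GaloisField.card 3 r hr.ne']
  push_cast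
  ring

lemma card_filter_ne_zero_Fq {r : ℕ} (hr : 0 < r) :
    (#(univ.filter fun a : Fq r => a ≠ 0) : ℂ) = 3 ^ r - 1 := by
  rw [filter_ne', card_erase_of_mem (mem_univ 0), card_univ, Nat.cast_sub Fintype.card_pos,
    card_Fq_eq hr, Nat.cast_one]

lemma deltaCount_eq_card_filter_piFinset (r m : ℕ) (β : Fq r) :
    deltaCount r m β =
      #((Fintype.piFinset fun _ : Fin m => univ.filter fun a : Fq r => a ≠ 0).filter
        fun γ => ∑ i, (γ i + (γ i)⁻¹) = β) := by
  rw [deltaCount]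
  congr 1
  ext γ
  simp [Fintype.mem_piFinset]

theorem stmt11 (r : ℕ) (hr : 0 < r) (m : ℕ) (β : Fq r) :
    ∑ a ∈ Finset.univ.filter (fun a : Fq r => a ≠ 0), lam r (-a * β) * Kl r (a ^ 2) ^ m =
      (3 : ℂ) ^ r * (deltaCount r m β : ℂ) - ((3 : ℂ) ^ r - 1) ^ m := by
  calc _ = ∑ a ∈ univ.filter (· ≠ 0), lamChar r (-a * β) *
        (∑ γ ∈ univ.filter (· ≠ 0), lamChar r (a * (γ + γ⁻¹))) ^ m := by
        refine sum_congr rfl fun a ha => ?_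
        simp only [Kl, sum_ne_zero_add_sq_mul_inv _ (mem_filter.1 ha).2, lam_eq_lamChar]
    _ = _ := by
      rw [AddChar.sum_mul_pow_sum_eq_card_mul_card_filter_sub (isPrimitive_lamChar r),
        card_Fq_eq hr, card_filter_ne_zero_Fq hr, deltaCount_eq_card_filter_piFinset]
end
end

section
/- Suppose r is even. Then for every β ∈ F_q, the number n₂(β) of w ∈ O^-(2,q) with Tr(w) = β equals: 0 if β² − 1 is a square different from −1 and 0; q+1 if β² − 1 = −1; 1 if β² − 1 = 0; and 2 if β² − 1 is a nonsquare in F_q. -/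
open Matrix
open scoped BigOperators Classical

noncomputable section

def deltaEps (r : ℕ) (ε : Fq r) : Matrix (Fin 2) (Fin 2) (Fq r) := !![1, 0; 0, -ε]

def Ominus2 (r : ℕ) (ε : Fq r) : Finset (Matrix (Fin 2) (Fin 2) (Fq r)) :=
  Finset.univ.filter (fun w => IsUnit w.det ∧ wᵀ * deltaEps r ε * w = deltaEps r ε)

/-- `n₂(β)`, the number of elements of `O⁻(2, q)` with trace `β`. -/
def nTwo (r : ℕ) (ε : Fq r) (β : Fq r) : ℕ :=
  ((Ominus2 r ε).filter (fun w => w.trace = β)).card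

/-!
Writing `w = [[a, b], [c, d]]`, the relation `ᵗw δ_ε w = δ_ε` says that `(a, c)` lies on the conic
`x² - εy² = 1` and that `(b, d)` is orthogonal to it, hence `(b, d) = D (εc, a)` with `D = det w`,
and then `D² = 1`. So `O⁻(2, q)` consists of the rotations `[[a, εc], [c, a]]` and the reflections
`[[a, -εc], [c, -a]]`. Reflections have trace `0`; since `q ≡ 1 mod 4`, `-1` is a square and no
rotation has trace `0` (that would force `εc² = -1`). Hence `n₂(0)` is the number `q + 1` of points
of the conic. For `β ≠ 0`, the trace `2a = -a` of a rotation forces `a = -β` in characteristic 3,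
so `n₂(β)` is the number `1 - χ(β² - 1)` of solutions of `εc² = β² - 1`, where `χ` is the
quadratic character.
-/

open Finset

section Orthogonal

variable {R : Type*} [CommRing R]

def rotationMatrix (ε a c : R) : Matrix (Fin 2) (Fin 2) R := !![a, ε * c; c, a]

def reflectionMatrix (ε a c : R) : Matrix (Fin 2) (Fin 2) R := !![a, -(ε * c); c, -a]

lemma transpose_mul_diagonal_mul (ε a b c d : R) :
    (!![a, b; c, d])ᵀ * !![1, 0; 0, -ε] * !![a, b; c, d] =
      !![a ^ 2 - ε * c ^ 2, a * b - ε * (c * d); a * b - ε * (c * d), b ^ 2 - ε * d ^ 2] := by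
  ext i j
  fin_cases i <;> fin_cases j <;> simp [Matrix.mul_apply, Fin.sum_univ_two] <;> ring

lemma trace_rotationMatrix (ε a c : R) : (rotationMatrix ε a c).trace = 2 * a := by
  rw [rotationMatrix, trace_fin_two_of, two_mul]

lemma trace_reflectionMatrix (ε a c : R) : (reflectionMatrix ε a c).trace = 0 := by
  rw [reflectionMatrix, trace_fin_two_of, add_neg_cancel]

lemma rotationMatrix_injective (ε a : R) : Function.Injective (rotationMatrix ε a) :=
  fun c c' h => by simpa [rotationMatrix] using congrFun (congrFun h 1) 0

lemma reflectionMatrix_injective (ε : R) :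
    Function.Injective (fun p : R × R => reflectionMatrix ε p.1 p.2) :=
  fun p p' h => by simp_all [reflectionMatrix, Prod.ext_iff]

variable {F : Type*} [Field F] {ε : F}

lemma isUnit_det_of_transpose_mul_mul_eq_self (hε : ε ≠ 0) {w : Matrix (Fin 2) (Fin 2) F}
    (hw : wᵀ * !![1, 0; 0, -ε] * w = !![1, 0; 0, -ε]) : IsUnit w.det := by
  have h := congrArg Matrix.det hw
  rw [det_mul, det_mul, det_transpose, det_fin_two_of] at h
  refine isUnit_iff_ne_zero.mpr fun h0 => hε ?_
  simpa [h0] using h.symm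

lemma transpose_mul_mul_eq_self_iff (hε : ε ≠ 0) (w : Matrix (Fin 2) (Fin 2) F) :
    wᵀ * !![1, 0; 0, -ε] * w = !![1, 0; 0, -ε] ↔
      ∃ a c, a ^ 2 - ε * c ^ 2 = 1 ∧
        (w = rotationMatrix ε a c ∨ w = reflectionMatrix ε a c) := by
  constructor
  · obtain ⟨a, b, c, d, rfl⟩ : ∃ a b c d, w = !![a, b; c, d] := ⟨_, _, _, _, eta_fin_two w⟩
    rw [transpose_mul_diagonal_mul]
    simp only [EmbeddingLike.apply_eq_iff_eq, vecCons_inj, and_true]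
    rintro ⟨⟨h₁, h₂⟩, -, h₃⟩
    obtain ⟨D, hD⟩ : ∃ D, D = a * d - b * c := ⟨_, rfl⟩
    have hb : b = D * (ε * c) := by linear_combination a * h₂ - b * h₁ - ε * c * hD
    have hd : d = D * a := by linear_combination c * h₂ - d * h₁ - a * hD
    have hD2 : D ^ 2 = 1 := by
      refine mul_left_cancel₀ hε ?_
      linear_combination -h₃ + (b + D * ε * c) * hb - ε * (d + D * a) * hd - ε * D ^ 2 * h₁
    subst hb hd
    refine ⟨a, c, h₁, ?_⟩
    rcases sq_eq_one_iff.mp hD2 with rfl | rfl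
    · exact Or.inl (by simp [rotationMatrix])
    · exact Or.inr (by simp [reflectionMatrix])
  · rintro ⟨a, c, h, rfl | rfl⟩ <;>
      simp only [rotationMatrix, reflectionMatrix, transpose_mul_diagonal_mul,
        EmbeddingLike.apply_eq_iff_eq, vecCons_inj, and_true] <;>
      exact ⟨⟨h, by ring⟩, by ring, by linear_combination (-ε) * h⟩

section Counting

lemma ne_zero_of_not_isSquare {M : Type*} [MonoidWithZero M] {a : M} (h : ¬IsSquare a) :
    a ≠ 0 := by
  rintro rfl
  exact h IsSquare.zero

variable {F : Type*} [Field F] {ε : F}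

lemma one_sub_mul_sq_ne_zero (hε : ¬IsSquare ε) (t : F) : 1 - ε * t ^ 2 ≠ 0 := by
  intro h
  have ht : t ≠ 0 := by rintro rfl; simp at h
  exact hε ⟨t⁻¹, by field_simp; linear_combination -h⟩

-- the line of slope `t` through `(-1, 0)` meets the conic `x² - εy² = 1` again here
def conicParam (ε t : F) : F × F :=
  ((1 + ε * t ^ 2) / (1 - ε * t ^ 2), 2 * t / (1 - ε * t ^ 2))

lemma conicParam_mem (hε : ¬IsSquare ε) (t : F) :
    (conicParam ε t).1 ^ 2 - ε * (conicParam ε t).2 ^ 2 = 1 := by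
  have := one_sub_mul_sq_ne_zero hε t
  simp only [conicParam]
  field_simp
  ring

lemma conicParam_fst_add_one (hε : ¬IsSquare ε) (t : F) :
    (conicParam ε t).1 + 1 = 2 / (1 - ε * t ^ 2) := by
  have := one_sub_mul_sq_ne_zero hε t
  simp only [conicParam]
  field_simp
  ring

lemma conicParam_snd_div (hε : ¬IsSquare ε) (h2 : (2 : F) ≠ 0) (t : F) :
    (conicParam ε t).2 / ((conicParam ε t).1 + 1) = t := by
  have := one_sub_mul_sq_ne_zero hε t
  rw [conicParam_fst_add_one hε, conicParam, div_div_div_cancel_right₀ this,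
    mul_div_cancel_left₀ t h2]

lemma conicParam_snd_div_fst_add_one {p : F × F} (h2 : (2 : F) ≠ 0)
    (hp : p.1 ^ 2 - ε * p.2 ^ 2 = 1) (h1 : p.1 + 1 ≠ 0) :
    conicParam ε (p.2 / (p.1 + 1)) = p := by
  have hden : 1 - ε * (p.2 / (p.1 + 1)) ^ 2 = 2 / (p.1 + 1) := by
    field_simp
    linear_combination hp
  ext
  · simp only [conicParam, hden]
    field_simp
    linear_combination -hp
  · simp only [conicParam, hden]
    field_simp

lemma card_sq_sub_mul_sq_eq_one [Fintype F] (hF : ringChar F ≠ 2) (hε : ¬IsSquare ε) :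
    #{p : F × F | p.1 ^ 2 - ε * p.2 ^ 2 = 1} = Fintype.card F + 1 := by
  have h2 : (2 : F) ≠ 0 := Ring.two_ne_zero hF
  have hε0 := ne_zero_of_not_isSquare hε
  have hconic : ({p : F × F | p.1 ^ 2 - ε * p.2 ^ 2 = 1} : Finset _) =
      insert (-1, 0) (univ.image (conicParam ε)) := by
    ext p
    simp only [mem_filter, mem_univ, true_and, mem_insert, mem_image]
    constructor
    · intro hp
      by_cases h1 : p.1 + 1 = 0
      · left
        have : ε * p.2 ^ 2 = 0 := by linear_combination -hp + (p.1 - 1) * h1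
        simp_all [Prod.ext_iff]
        linear_combination h1
      · exact Or.inr ⟨_, conicParam_snd_div_fst_add_one h2 hp h1⟩
    · rintro (rfl | ⟨t, rfl⟩)
      · ring
      · exact conicParam_mem hε t
  have hnot : ((-1, 0) : F × F) ∉ univ.image (conicParam ε) := by
    simp only [mem_image, mem_univ, true_and, not_exists]
    intro t ht
    have := conicParam_fst_add_one hε t
    rw [ht] at this
    exact div_ne_zero h2 (one_sub_mul_sq_ne_zero hε t) (by simpa using this.symm)
  have hinj : Function.Injective (conicParam ε) :=
    Function.LeftInverse.injective (g := fun p : F × F => p.2 / (p.1 + 1))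
      (conicParam_snd_div hε h2)
  rw [hconic, card_insert_of_notMem hnot, card_image_of_injective _ hinj, card_univ]

lemma card_mul_sq_eq [Fintype F] (hF : ringChar F ≠ 2) (hε : ¬IsSquare ε) (m : F) :
    (#{c : F | ε * c ^ 2 = m} : ℤ) = 1 - quadraticChar F m := by
  have hε0 := ne_zero_of_not_isSquare hε
  have hχ : quadraticChar F m = - quadraticChar F (m / ε) := by
    conv_lhs => rw [← div_mul_cancel₀ m hε0]
    rw [map_mul, quadraticChar_neg_one_iff_not_isSquare.mpr hε, mul_neg_one]
  rw [hχ, sub_neg_eq_add, add_comm, ← quadraticChar_card_sqrts hF, Set.toFinset_ofPred]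
  congr 2
  ext c
  simp only [mem_filter, mem_univ, true_and]
  rw [eq_div_iff hε0, mul_comm]

end Counting

section Fq

variable {r : ℕ} {ε : Fq r}

lemma card_Fq (hr : r ≠ 0) : Fintype.card (Fq r) = 3 ^ r := by
  rw [← Nat.card_eq_fintype_card, GaloisField.card 3 r hr]

lemma ringChar_Fq_ne_two : ringChar (Fq r) ≠ 2 := by
  rw [ringChar.eq (Fq r) 3]
  decide

lemma isSquare_neg_one_Fq (hr : r ≠ 0) (hreven : Even r) : IsSquare (-1 : Fq r) := by
  rw [FiniteField.isSquare_neg_one_iff, card_Fq hr]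
  obtain ⟨k, rfl⟩ := hreven
  rw [← two_mul, pow_mul, Nat.pow_mod]
  norm_num

lemma mem_Ominus2_iff (hε : ε ≠ 0) (w : Matrix (Fin 2) (Fin 2) (Fq r)) :
    w ∈ Ominus2 r ε ↔ ∃ a c, a ^ 2 - ε * c ^ 2 = 1 ∧
      (w = rotationMatrix ε a c ∨ w = reflectionMatrix ε a c) := by
  rw [Ominus2, mem_filter, ← transpose_mul_mul_eq_self_iff hε, deltaEps]
  exact ⟨fun h => h.2.2, fun h => ⟨mem_univ w, isUnit_det_of_transpose_mul_mul_eq_self hε h, h⟩⟩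

lemma filter_Ominus2_trace_eq_of_ne_zero (hε : ε ≠ 0) {β : Fq r} (hβ : β ≠ 0) :
    (Ominus2 r ε).filter (fun w => w.trace = β) =
      ({c | ε * c ^ 2 = β ^ 2 - 1} : Finset (Fq r)).image (rotationMatrix ε (-β)) := by
  have h3 : (3 : Fq r) = 0 := by exact_mod_cast CharP.cast_eq_zero (Fq r) 3
  ext w
  simp only [mem_filter, mem_image, mem_univ, true_and, mem_Ominus2_iff hε]
  constructor
  · rintro ⟨⟨a, c, h, rfl | rfl⟩, htr⟩
    · rw [trace_rotationMatrix] at htr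
      obtain rfl : a = -β := by linear_combination a * h3 - htr
      exact ⟨c, by linear_combination -h, rfl⟩
    · rw [trace_reflectionMatrix] at htr
      exact absurd htr.symm hβ
  · rintro ⟨c, hc, rfl⟩
    refine ⟨⟨-β, c, by linear_combination -hc, Or.inl rfl⟩, ?_⟩
    rw [trace_rotationMatrix]
    linear_combination -β * h3

lemma filter_Ominus2_trace_eq_zero (hε : ¬IsSquare ε) (hneg : IsSquare (-1 : Fq r)) :
    (Ominus2 r ε).filter (fun w => w.trace = 0) =
      ({p | p.1 ^ 2 - ε * p.2 ^ 2 = 1} : Finset (Fq r × Fq r)).image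
        (fun p => reflectionMatrix ε p.1 p.2) := by
  have h2 : (2 : Fq r) ≠ 0 := Ring.two_ne_zero ringChar_Fq_ne_two
  ext w
  simp only [mem_filter, mem_image, mem_univ, true_and,
    mem_Ominus2_iff (ne_zero_of_not_isSquare hε)]
  constructor
  · rintro ⟨⟨a, c, h, rfl | rfl⟩, htr⟩
    · rw [trace_rotationMatrix, mul_eq_zero, or_iff_right h2] at htr
      subst htr
      have hc : c ≠ 0 := by rintro rfl; simp at h
      refine absurd ?_ hε
      obtain ⟨u, hu⟩ := hneg
      exact ⟨u / c, by field_simp; linear_combination hu - h⟩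
    · exact ⟨(a, c), h, rfl⟩
  · rintro ⟨p, hp, rfl⟩
    exact ⟨⟨p.1, p.2, hp, Or.inr rfl⟩, trace_reflectionMatrix ε p.1 p.2⟩

lemma nTwo_zero (hr : r ≠ 0) (hreven : Even r) (hε : ¬IsSquare ε) : nTwo r ε 0 = 3 ^ r + 1 := by
  rw [nTwo, filter_Ominus2_trace_eq_zero hε (isSquare_neg_one_Fq hr hreven),
    card_image_of_injective _ (reflectionMatrix_injective ε),
    card_sq_sub_mul_sq_eq_one ringChar_Fq_ne_two hε, card_Fq hr]

lemma nTwo_of_ne_zero (hε : ¬IsSquare ε) {β : Fq r} (hβ : β ≠ 0) :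
    (nTwo r ε β : ℤ) = 1 - quadraticChar (Fq r) (β ^ 2 - 1) := by
  rw [nTwo, filter_Ominus2_trace_eq_of_ne_zero (ne_zero_of_not_isSquare hε) hβ,
    card_image_of_injective _ (rotationMatrix_injective ε _), card_mul_sq_eq ringChar_Fq_ne_two hε]

end Fq

theorem stmt15 (r : ℕ) (hr : 0 < r) (hreven : Even r) (ε : Fq r) (hε : ¬ IsSquare ε)
    (β : Fq r) :
    (IsSquare (β ^ 2 - 1) ∧ β ^ 2 - 1 ≠ -1 ∧ β ^ 2 - 1 ≠ 0 → nTwo r ε β = 0)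
    ∧ (β ^ 2 - 1 = -1 → nTwo r ε β = 3 ^ r + 1)
    ∧ (β ^ 2 - 1 = 0 → nTwo r ε β = 1)
    ∧ (¬ IsSquare (β ^ 2 - 1) → nTwo r ε β = 2) := by
  by_cases hβ : β = 0
  · subst hβ
    have hneg : (0 : Fq r) ^ 2 - 1 = -1 := by ring
    refine ⟨fun h => absurd hneg h.2.1, fun _ => nTwo_zero hr.ne' hreven hε,
      fun h => absurd (hneg ▸ h) (neg_ne_zero.mpr one_ne_zero), fun h => ?_⟩
    exact absurd (hneg ▸ isSquare_neg_one_Fq hr.ne' hreven) h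
  · have hcount := nTwo_of_ne_zero hε hβ
    refine ⟨fun ⟨hsq, _, h0⟩ => ?_, fun h => ?_, fun h0 => ?_, fun hsq => ?_⟩
    · rw [(quadraticChar_one_iff_isSquare h0).mpr hsq] at hcount
      omega
    · exact absurd (pow_eq_zero_iff two_ne_zero |>.mp (by linear_combination h)) hβ
    · rw [h0, quadraticChar_zero] at hcount
      omega
    · rw [quadraticChar_neg_one_iff_not_isSquare.mpr hsq] at hcount
      omega
end Orthogonal
end
end
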